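/- arXiv:1910.05058 — 2 statements merged into one kernel-verified Lean document; each statement's English description precedes it below -/
import Mathlib

section
/- If a finite loopless graph G (parallel edges allowed) can be edge-partitioned into two spanning subgraphs G1 and G2 such that G1 is Z3-connected and G2 is 2-edge-connected, then G belongs to the class S3; that is, for every Z3-boundary β of G there is a strongly connected orientation D of G such that the out-degree minus the in-degree of every vertex v under D is congruent to β(v) modulo 3. -/
open scoped Classical

/-- A finite loopless multigraph: finite vertex and edge types, each edge has an
unordered pair of distinct endpoints (parallel edges allowed, loops forbidden). -/
structure Multigraph where
  V : Type
  E : Type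
  fintypeV : Fintype V
  fintypeE : Fintype E
  ends : E → Sym2 V
  loopless : ∀ e, ¬ (ends e).IsDiag

attribute [instance] Multigraph.fintypeV Multigraph.fintypeE

namespace Multigraph

/-- `D` is an orientation of `G`: each edge is assigned an ordered pair (tail, head)
compatible with its endpoints. -/
def IsOrientation (G : Multigraph) (D : G.E → G.V × G.V) : Prop :=
  ∀ e, G.ends e = s((D e).1, (D e).2)

/-- Out-degree of `v` under the orientation `D` (tail = first component). -/
noncomputable def outDeg (G : Multigraph) (D : G.E → G.V × G.V) (v : G.V) : ℕ :=
  {e : G.E | (D e).1 = v}.ncard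

/-- In-degree of `v` under the orientation `D` (head = second component). -/
noncomputable def inDeg (G : Multigraph) (D : G.E → G.V × G.V) (v : G.V) : ℕ :=
  {e : G.E | (D e).2 = v}.ncard

/-- Flow conservation: at every vertex the sum of `f` over outgoing arcs equals the sum
over incoming arcs. -/
def IsConserving (G : Multigraph) (D : G.E → G.V × G.V) (f : G.E → ℤ) : Prop :=
  ∀ v : G.V,
    (∑ e : G.E, if (D e).1 = v then f e else 0) =
      ∑ e : G.E, if (D e).2 = v then f e else 0

/-- `G` has a nowhere-zero 3-flow. -/
def HasNZ3Flow (G : Multigraph) : Prop :=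
  ∃ (D : G.E → G.V × G.V) (f : G.E → ℤ),
    G.IsOrientation D ∧ (∀ e, 1 ≤ |f e| ∧ |f e| ≤ 2) ∧ G.IsConserving D f

/-- `G` is `Z3`-connected: every `Z3`-boundary is realized by some orientation. -/
def Z3Connected (G : Multigraph) : Prop :=
  ∀ β : G.V → ZMod 3, (∑ v : G.V, β v) = 0 →
    ∃ D : G.E → G.V × G.V, G.IsOrientation D ∧
      ∀ v : G.V, ((G.outDeg D v : ZMod 3) - (G.inDeg D v : ZMod 3)) = β v

/-- Degree of a vertex: number of edges incident with it. -/
noncomputable def degree (G : Multigraph) (v : G.V) : ℕ :=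
  {e : G.E | v ∈ G.ends e}.ncard

/-- `(S, F)` is a triangle-tree subgraph of `G`: start from a triangle and repeatedly
add a new vertex joined to the two endpoints of an existing edge. -/
inductive IsTriangleTree (G : Multigraph) : Set G.V → Set G.E → Prop
  | base (x y z : G.V) (e1 e2 e3 : G.E)
      (hxy : x ≠ y) (hxz : x ≠ z) (hyz : y ≠ z)
      (h1 : G.ends e1 = s(x, y)) (h2 : G.ends e2 = s(y, z)) (h3 : G.ends e3 = s(x, z)) :
      IsTriangleTree G {x, y, z} {e1, e2, e3}
  | grow (S : Set G.V) (F : Set G.E) (hT : IsTriangleTree G S F)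
      (v a b : G.V) (hv : v ∉ S) (e : G.E) (he : e ∈ F) (hab : G.ends e = s(a, b))
      (e1 e2 : G.E) (h1 : G.ends e1 = s(v, a)) (h2 : G.ends e2 = s(v, b)) :
      IsTriangleTree G (insert v S) (insert e1 (insert e2 F))

/-- `G` contains a spanning triangle-tree. -/
def HasSpanningTriangleTree (G : Multigraph) : Prop :=
  ∃ F : Set G.E, G.IsTriangleTree Set.univ F

/-- Degree of `v` inside the edge set `F`. -/
noncomputable def degIn (G : Multigraph) (F : Set G.E) (v : G.V) : ℕ :=
  {e : G.E | e ∈ F ∧ v ∈ G.ends e}.ncard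

/-- `(S, F)` is a triangle-path subgraph: a triangle-tree which is either a single
triangle or has exactly two leaves (vertices of degree 2). -/
def IsTrianglePath (G : Multigraph) (S : Set G.V) (F : Set G.E) : Prop :=
  G.IsTriangleTree S F ∧ (S.ncard = 3 ∨ {v ∈ S | G.degIn F v = 2}.ncard = 2)

/-- `(S, F)` is a subgraph of `G`: endpoints of every chosen edge are chosen vertices. -/
def Subgraph (G : Multigraph) (S : Set G.V) (F : Set G.E) : Prop :=
  ∀ e ∈ F, ∀ v, v ∈ G.ends e → v ∈ S

/-- `G` is isomorphic to the complete (simple) graph on `n` vertices. -/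
def IsCompleteGraphOn (G : Multigraph) (n : ℕ) : Prop :=
  ∃ (φ : G.V ≃ Fin n) (ψ : G.E ≃ {p : Sym2 (Fin n) // ¬ p.IsDiag}),
    ∀ e, Sym2.map (⇑φ) (G.ends e) = (ψ e).1

def IsK3 (G : Multigraph) : Prop := G.IsCompleteGraphOn 3

def IsK4 (G : Multigraph) : Prop := G.IsCompleteGraphOn 4

/-- `G` is a bull-growing of `H` (equivalently, `H` is the bull-reduction of `G`):
`u, v` are adjacent vertices of degree 3 in `G` with common neighbour `w`, the remaining
neighbours of `u`, `v` are `a`, `b`, and `H = G - u - v + ab` (with a loop deleted when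
`a = b`). -/
def IsBullGrowing (G H : Multigraph) : Prop :=
  ∃ (u v w a b : G.V) (euv euw evw eua evb : G.E),
    G.ends euv = s(u, v) ∧ G.ends euw = s(u, w) ∧ G.ends evw = s(v, w) ∧
    G.ends eua = s(u, a) ∧ G.ends evb = s(v, b) ∧
    a ≠ v ∧ b ≠ u ∧
    euv ≠ euw ∧ euv ≠ eua ∧ euw ≠ eua ∧
    euv ≠ evw ∧ euv ≠ evb ∧ evw ≠ evb ∧
    {e : G.E | u ∈ G.ends e} = {euv, euw, eua} ∧
    {e : G.E | v ∈ G.ends e} = {euv, evw, evb} ∧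
    ∃ φ : H.V → G.V, Function.Injective φ ∧
      Set.range φ = {x : G.V | x ≠ u ∧ x ≠ v} ∧
      ((a = b → ∃ ψ : H.E → G.E, Function.Injective ψ ∧
          Set.range ψ = {e : G.E | e ∉ ({euv, euw, evw, eua, evb} : Set G.E)} ∧
          ∀ e, G.ends (ψ e) = Sym2.map φ (H.ends e)) ∧
       (a ≠ b → ∃ (e0 : H.E) (ψ : H.E → G.E),
          Sym2.map φ (H.ends e0) = s(a, b) ∧
          Set.InjOn ψ {e : H.E | e ≠ e0} ∧
          ψ '' {e : H.E | e ≠ e0} = {e : G.E | e ∉ ({euv, euw, evw, eua, evb} : Set G.E)} ∧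
          ∀ e, e ≠ e0 → G.ends (ψ e) = Sym2.map φ (H.ends e)))

/-- `(S, F)` is a triangle (a `K3` subgraph) of `G`. -/
def IsTriangleSub (G : Multigraph) (S : Set G.V) (F : Set G.E) : Prop :=
  ∃ (x y z : G.V) (e1 e2 e3 : G.E),
    x ≠ y ∧ x ≠ z ∧ y ≠ z ∧
    G.ends e1 = s(x, y) ∧ G.ends e2 = s(y, z) ∧ G.ends e3 = s(x, z) ∧
    S = {x, y, z} ∧ F = {e1, e2, e3}

/-- The subgraph `(S, F)` of `G` is `Z3`-connected (as a graph in its own right). -/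
def SubZ3Connected (G : Multigraph) (S : Set G.V) (F : Set G.E) : Prop :=
  ∀ β : G.V → ZMod 3, (∀ v, v ∉ S → β v = 0) → (∑ v : G.V, β v) = 0 →
    ∃ D : G.E → G.V × G.V, G.IsOrientation D ∧
      ∀ v ∈ S, (({e : G.E | e ∈ F ∧ (D e).1 = v}.ncard : ZMod 3)
        - ({e : G.E | e ∈ F ∧ (D e).2 = v}.ncard : ZMod 3)) = β v

/-- `G` is the 2-sum of its subgraphs `(SA, FA)` and `(SB, FB)`:
`E(G) = E(A) ∪ E(B)`, `|E(A) ∩ E(B)| = 1` and `|V(A) ∩ V(B)| = 2`. -/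
def IsTwoSum (G : Multigraph) (SA : Set G.V) (FA : Set G.E)
    (SB : Set G.V) (FB : Set G.E) : Prop :=
  G.Subgraph SA FA ∧ G.Subgraph SB FB ∧
  FA ∪ FB = Set.univ ∧ (FA ∩ FB).ncard = 1 ∧ (SA ∩ SB).ncard = 2

/-- All vertices of `G` are joined by walks using only edges from `F`. -/
def ConnOn (G : Multigraph) (F : Set G.E) : Prop :=
  ∀ u v : G.V, Relation.ReflTransGen (fun x y => ∃ e ∈ F, G.ends e = s(x, y)) u v

/-- The spanning subgraph with edge set `F` is 2-edge-connected:
connected and with no cut edge. -/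
def TwoEdgeConnOn (G : Multigraph) (F : Set G.E) : Prop :=
  G.ConnOn F ∧ ∀ e ∈ F, G.ConnOn (F \ {e})

/-- The orientation `D` is strongly connected. -/
def StronglyConnected (G : Multigraph) (D : G.E → G.V × G.V) : Prop :=
  ∀ u v : G.V, Relation.ReflTransGen (fun x y => ∃ e : G.E, D e = (x, y)) u v

/-- `G` belongs to the class `S3`: every `Z3`-boundary is realized by a strongly
connected orientation. -/
def InS3 (G : Multigraph) : Prop :=
  ∀ β : G.V → ZMod 3, (∑ v : G.V, β v) = 0 →
    ∃ D : G.E → G.V × G.V, G.IsOrientation D ∧ G.StronglyConnected D ∧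
      ∀ v : G.V, ((G.outDeg D v : ZMod 3) - (G.inDeg D v : ZMod 3)) = β v

/-- `G` has a cycle (of length ≥ 2, so possibly a pair of parallel edges) all of whose
edges lie in `A`. -/
def HasCycleIn (G : Multigraph) (A : Set G.E) : Prop :=
  ∃ (vs : List G.V) (es : List G.E),
    2 ≤ vs.length ∧ vs.Nodup ∧ es.Nodup ∧ es.length = vs.length ∧
    (∀ e ∈ es, e ∈ A) ∧
    ∀ (i : ℕ) (h1 : i < es.length) (h2 : i < vs.length)
      (h3 : (i + 1) % vs.length < vs.length),
      G.ends (es.get ⟨i, h1⟩) = s(vs.get ⟨i, h2⟩, vs.get ⟨(i + 1) % vs.length, h3⟩)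

/-- `(vs, es)` is a path from `u` to `v` in `G`. -/
def IsPath (G : Multigraph) (u v : G.V) (vs : List G.V) (es : List G.E) : Prop :=
  vs.Nodup ∧ es.Nodup ∧ vs.head? = some u ∧ vs.getLast? = some v ∧
  vs.length = es.length + 1 ∧
  ∀ (i : ℕ) (h1 : i < es.length) (h2 : i < vs.length) (h3 : i + 1 < vs.length),
    G.ends (es.get ⟨i, h1⟩) = s(vs.get ⟨i, h2⟩, vs.get ⟨i + 1, h3⟩)

/-- `H` is isomorphic to the subgraph `(S, F)` of `G`. -/
def IsIsoToSub (H G : Multigraph) (S : Set G.V) (F : Set G.E) : Prop :=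
  ∃ (φ : H.V → G.V) (ψ : H.E → G.E),
    Function.Injective φ ∧ Set.range φ = S ∧
    Function.Injective ψ ∧ Set.range ψ = F ∧
    ∀ e, G.ends (ψ e) = Sym2.map φ (H.ends e)

/-- `G'` is (isomorphic to) the graph obtained from `G` by adding two new edges with
endpoint pairs `p` and `q`. -/
def IsAddTwoEdges (G : Multigraph) (p q : Sym2 G.V) (G' : Multigraph) : Prop :=
  ∃ (φ : G.V ≃ G'.V) (e1 e2 : G'.E), e1 ≠ e2 ∧
    G'.ends e1 = Sym2.map (⇑φ) p ∧ G'.ends e2 = Sym2.map (⇑φ) q ∧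
    ∃ ψ : G.E → G'.E, Function.Injective ψ ∧
      Set.range ψ = {e : G'.E | e ≠ e1 ∧ e ≠ e2} ∧
      ∀ e, G'.ends (ψ e) = Sym2.map (⇑φ) (G.ends e)

/-- `G'` is (isomorphic to) the graph obtained from `G` by deleting the edges in `X`
and adding one new edge with endpoint pair `p`. -/
def IsDeleteAddEdge (G : Multigraph) (X : Set G.E) (p : Sym2 G.V) (G' : Multigraph) : Prop :=
  ∃ (φ : G.V ≃ G'.V) (e0 : G'.E),
    G'.ends e0 = Sym2.map (⇑φ) p ∧
    ∃ ψ : {e : G.E // e ∉ X} → G'.E, Function.Injective ψ ∧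
      Set.range ψ = {e : G'.E | e ≠ e0} ∧
      ∀ e : {e : G.E // e ∉ X}, G'.ends (ψ e) = Sym2.map (⇑φ) (G.ends e.1)

/-- `G` is a crystal: a spanning triangle-path plus one extra edge joining its two
leaves. -/
def IsCrystal (G : Multigraph) : Prop :=
  ∃ (F : Set G.E) (u v : G.V) (e0 : G.E),
    G.IsTrianglePath Set.univ F ∧ u ≠ v ∧
    G.degIn F u = 2 ∧ G.degIn F v = 2 ∧
    e0 ∉ F ∧ G.ends e0 = s(u, v) ∧ insert e0 F = Set.univ

/-- The subgraph with edge set `F` is triangularly connected: any two of its edges lie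
on a common triangle-path inside it. -/
def TriangularlyConnectedOn (G : Multigraph) (F : Set G.E) : Prop :=
  ∀ e1 ∈ F, ∀ e2 ∈ F, ∃ (S : Set G.V) (F' : Set G.E),
    F' ⊆ F ∧ G.IsTrianglePath S F' ∧ e1 ∈ F' ∧ e2 ∈ F'

/-- `G` is triangularly connected. -/
def TriangularlyConnected (G : Multigraph) : Prop :=
  G.TriangularlyConnectedOn Set.univ

/-- `G` contains a spanning triangularly-connected subgraph. -/
def HasSpanningTriangularlyConnected (G : Multigraph) : Prop :=
  ∃ F : Set G.E, G.TriangularlyConnectedOn F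

/-- `G` admits a circular `t/s`-flow. -/
def HasCircularFlow (G : Multigraph) (t s : ℤ) : Prop :=
  ∃ (D : G.E → G.V × G.V) (f : G.E → ℤ),
    G.IsOrientation D ∧ (∀ e, s ≤ |f e| ∧ |f e| ≤ t - s) ∧ G.IsConserving D f

end Multigraph

/-- `G` can be obtained from `K4` by a (possibly empty) series of bull-growing
operations. -/
inductive FromK4ByBull : Multigraph → Prop
  | base (G : Multigraph) : G.IsK4 → FromK4ByBull G
  | grow (G H : Multigraph) : FromK4ByBull H → G.IsBullGrowing H → FromK4ByBull G

/-
Robbins' theorem gives a strongly connected orientation of `G₂`: a strongly connected vertex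
set `W ≠ V` absorbs an ear, namely a non-bridge edge `ux` leaving `W` together with a path back
from `x` to `u` avoiding `ux`, oriented as a directed cycle, so a maximal one is `V`. The
`G₂`-arcs contribute some net out-degree `γ` of total zero, so `β - γ` is again a
`ℤ₃`-boundary; orienting `G₁` by its `ℤ₃`-connectivity for `β - γ` then produces boundary `β`,
and the orientation stays strongly connected because the `G₂`-arcs alone already are.
-/

lemma Set.sum_ncard_fiber {α β : Type*} [Fintype α] [Fintype β] (s : Set α) (g : α → β) :
    ∑ b, {a | a ∈ s ∧ g a = b}.ncard = s.ncard := by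
  rw [Set.ncard_eq_toFinset_card' s,
    Finset.card_eq_sum_card_fiberwise fun a _ => Finset.mem_univ (g a)]
  refine Finset.sum_congr rfl fun b _ => ?_
  rw [Set.ncard_eq_toFinset_card']
  congr 1
  ext a
  simp

lemma Set.ncard_fiber_ite {α β : Type*} [Finite α] (s : Set α) [DecidablePred (· ∈ s)]
    (g g' : α → β) (b : β) :
    {a | (if a ∈ s then g a else g' a) = b}.ncard =
      {a | a ∈ s ∧ g a = b}.ncard + {a | a ∈ sᶜ ∧ g' a = b}.ncard := by
  rw [← Set.ncard_union_eq (Set.disjoint_left.2 fun a h h' => h'.1 h.1)]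
  congr 1
  ext a
  by_cases ha : a ∈ s <;> simp [ha]

namespace Multigraph

open Relation Function

variable (G : Multigraph)

def arc (d : G.E → G.V × G.V) (O : Set G.E) (x y : G.V) : Prop :=
  ∃ f ∈ O, d f = (x, y)

def edgeGraph (F : Set G.E) : SimpleGraph G.V :=
  SimpleGraph.fromRel fun x y => ∃ f ∈ F, G.ends f = s(x, y)

noncomputable def outDegOn (F : Set G.E) (d : G.E → G.V × G.V) (v : G.V) : ℕ :=
  {e : G.E | e ∈ F ∧ (d e).1 = v}.ncard

noncomputable def inDegOn (F : Set G.E) (d : G.E → G.V × G.V) (v : G.V) : ℕ :=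
  {e : G.E | e ∈ F ∧ (d e).2 = v}.ncard

structure IsPartialOrientation (F : Set G.E) (d : G.E → G.V × G.V) (O : Set G.E)
    (W : Set G.V) : Prop where
  isOrientation : G.IsOrientation d
  subset : O ⊆ F
  subgraph : G.Subgraph W O

structure IsStrongPartialOrientation (F : Set G.E) (d : G.E → G.V × G.V) (O : Set G.E)
    (W : Set G.V) : Prop extends G.IsPartialOrientation F d O W where
  reach : ∀ p ∈ W, ∀ q ∈ W, ReflTransGen (G.arc d O) p q

variable {G}

lemma exists_isOrientation : ∃ d, G.IsOrientation d :=
  ⟨fun e => (G.ends e).out, fun _ => (Quot.out_eq _).symm⟩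

lemma arc_mono {d : G.E → G.V × G.V} {O O' : Set G.E} (h : O ⊆ O') :
    G.arc d O ≤ G.arc d O' :=
  fun _ _ ⟨f, hf, hfd⟩ => ⟨f, h hf, hfd⟩

lemma arc_le_arc_update {d : G.E → G.V × G.V} {O : Set G.E} {f : G.E} (hf : f ∉ O)
    (a : G.V × G.V) : G.arc d O ≤ G.arc (update d f a) (insert f O) :=
  fun _ _ ⟨g, hg, hgd⟩ =>
    ⟨g, Set.mem_insert_of_mem _ hg, by rwa [update_of_ne (ne_of_mem_of_not_mem hg hf)]⟩

lemma arc_update_self (d : G.E → G.V × G.V) (O : Set G.E) (f : G.E) (x y : G.V) :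
    G.arc (update d f (x, y)) (insert f O) x y :=
  ⟨f, Set.mem_insert _ _, update_self _ _ _⟩

lemma edgeGraph_adj {F : Set G.E} {x y : G.V} (h : (G.edgeGraph F).Adj x y) :
    ∃ f ∈ F, G.ends f = s(x, y) := by
  obtain ⟨-, h | ⟨f, hf, hfyx⟩⟩ := h
  · exact h
  · exact ⟨f, hf, hfyx.trans Sym2.eq_swap⟩

lemma ConnOn.reachable {F : Set G.E} (h : G.ConnOn F) (u v : G.V) :
    (G.edgeGraph F).Reachable u v := by
  rw [SimpleGraph.reachable_iff_reflTransGen]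
  refine ReflTransGen.mono (fun x y ⟨f, hf, hxy⟩ => ⟨?_, Or.inl ⟨f, hf, hxy⟩⟩) _ _
    (h u v)
  rintro rfl
  exact G.loopless f (hxy ▸ Sym2.mk_isDiag_iff.mpr rfl)

lemma ConnOn.exists_edge_mem_not_mem {F : Set G.E} (h : G.ConnOn F) {W : Set G.V}
    (hne : W.Nonempty) (hW : W ≠ Set.univ) :
    ∃ f ∈ F, ∃ u ∈ W, ∃ x ∉ W, G.ends f = s(u, x) := by
  obtain ⟨w, hw⟩ := hne
  obtain ⟨z, hz⟩ := (Set.ne_univ_iff_exists_notMem W).mp hW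
  by_contra! hclosed
  refine hz ?_
  clear hz
  induction h w z with
  | refl => exact hw
  | tail _ hstep ih =>
    obtain ⟨f, hf, hxy⟩ := hstep
    by_contra hy
    exact hclosed f hf _ ih _ hy hxy

variable {F : Set G.E} {d : G.E → G.V × G.V} {O : Set G.E} {W : Set G.V}

lemma IsPartialOrientation.mono_edges {F' : Set G.E} (h : G.IsPartialOrientation F d O W)
    (hF : F ⊆ F') :
    G.IsPartialOrientation F' d O W :=
  ⟨h.isOrientation, h.subset.trans hF, h.subgraph⟩

lemma IsPartialOrientation.insert (h : G.IsPartialOrientation F d O W) {f : G.E} (hf : f ∈ F)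
    {x y : G.V} (hxy : G.ends f = s(x, y)) :
    G.IsPartialOrientation F (update d f (x, y)) (insert f O) (insert x (insert y W)) := by
  refine ⟨fun g => ?_, Set.insert_subset hf h.subset, fun g hg v hv => ?_⟩
  · rcases eq_or_ne g f with rfl | hgf
    · rwa [update_self]
    · rw [update_of_ne hgf]; exact h.isOrientation g
  · rcases hg with rfl | hg
    · rw [hxy, Sym2.mem_iff] at hv
      rcases hv with rfl | rfl
      · exact Set.mem_insert _ _
      · exact Set.mem_insert_of_mem _ (Set.mem_insert _ _)
    · exact Set.mem_insert_of_mem _ (Set.mem_insert_of_mem _ (h.subgraph g hg v hv))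

lemma IsStrongPartialOrientation.exists_path_orientation {e : G.E}
    (hW : G.IsStrongPartialOrientation (F \ {e}) d O W) {u : G.V} (hu : u ∈ W) {x : G.V}
    (p : (G.edgeGraph (F \ {e})).Walk x u) (hp : p.IsPath) :
    ∃ d' O' W', G.IsPartialOrientation (F \ {e}) d' O' W' ∧ G.arc d O ≤ G.arc d' O' ∧
      W ⊆ W' ∧ x ∈ W' ∧ W' ⊆ W ∪ {y | y ∈ p.support} ∧
      ∀ q ∈ W', ReflTransGen (G.arc d' O') q u ∧ ReflTransGen (G.arc d' O') x q := by
  induction p with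
  | nil => exact ⟨d, O, W, hW.toIsPartialOrientation, le_rfl, subset_rfl, hu,
      Set.subset_union_left, fun q hq => ⟨hW.reach q hq _ hu, hW.reach _ hu q hq⟩⟩
  | @cons x c u hxc p ih =>
    by_cases hxW : x ∈ W
    · exact ⟨d, O, W, hW.toIsPartialOrientation, le_rfl, subset_rfl, hxW,
        Set.subset_union_left, fun q hq => ⟨hW.reach q hq _ hu, hW.reach _ hxW q hq⟩⟩
    rw [SimpleGraph.Walk.cons_isPath_iff] at hp
    obtain ⟨d', O', W', hO', hle, hWW', hcW', hW'p, hreach⟩ := ih hu hp.1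
    have hxW' : x ∉ W' := fun hx => (hW'p hx).elim hxW hp.2
    obtain ⟨f, hf, hfxc⟩ := edgeGraph_adj hxc
    have hfO' : f ∉ O' := fun hfO => hxW' (hO'.subgraph f hfO x (by simp [hfxc]))
    have hmono := arc_le_arc_update (d := d') hfO' (x, c)
    have hxc' := arc_update_self d' O' f x c
    refine ⟨update d' f (x, c), insert f O', insert x W', ?_, hle.trans hmono,
      hWW'.trans (Set.subset_insert _ _), Set.mem_insert _ _, ?_, ?_⟩
    · simpa [Set.insert_eq_of_mem hcW'] using hO'.insert hf hfxc
    · rintro y (rfl | hy)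
      · exact Or.inr (SimpleGraph.Walk.start_mem_support _)
      · rcases hW'p hy with hy | hy
        · exact Or.inl hy
        · exact Or.inr (List.mem_cons_of_mem _ hy)
    · have hcu := ReflTransGen.mono hmono _ _ (hreach c hcW').1
      rintro q (rfl | hq)
      · exact ⟨ReflTransGen.head hxc' hcu, ReflTransGen.refl⟩
      · exact ⟨ReflTransGen.mono hmono _ _ (hreach q hq).1,
          ReflTransGen.head hxc' (ReflTransGen.mono hmono _ _ (hreach q hq).2)⟩

lemma IsStrongPartialOrientation.exists_ssuperset (hF : G.TwoEdgeConnOn F)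
    (hW : G.IsStrongPartialOrientation F d O W) (hne : W.Nonempty) (huniv : W ≠ Set.univ) :
    ∃ d' O' W', G.IsStrongPartialOrientation F d' O' W' ∧ W ⊂ W' := by
  obtain ⟨e, he, u, hu, x, hx, hux⟩ := hF.1.exists_edge_mem_not_mem hne huniv
  have heO : e ∉ O := fun heO => hx (hW.subgraph e heO x (by simp [hux]))
  have hW' : G.IsStrongPartialOrientation (F \ {e}) d O W :=
    ⟨⟨hW.isOrientation, fun f hf => ⟨hW.subset hf, fun hfe => heO (hfe ▸ hf)⟩,
      hW.subgraph⟩,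
      hW.reach⟩
  obtain ⟨p⟩ := (hF.2 e he).reachable x u
  obtain ⟨d', O', W', hO', hle, hWW', hxW', -, hreach⟩ :=
    hW'.exists_path_orientation hu p.bypass p.bypass_isPath
  have heO' : e ∉ O' := fun heO' => (hO'.subset heO').2 rfl
  have hmono := arc_le_arc_update (d := d') heO' (u, x)
  refine ⟨update d' e (u, x), insert e O', W', ⟨?_, fun q hq r hr => ?_⟩,
    hWW'.ssubset_of_mem_notMem hxW' hx⟩
  · simpa [Set.insert_eq_of_mem hxW', Set.insert_eq_of_mem (hWW' hu)] using
      (hO'.mono_edges Set.sdiff_subset).insert he hux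
  · exact (ReflTransGen.mono hmono _ _ (hreach q hq).1).trans <|
      ReflTransGen.head (arc_update_self d' O' e u x) (ReflTransGen.mono hmono _ _ (hreach r hr).2)

theorem TwoEdgeConnOn.exists_stronglyConnected_orientation (hF : G.TwoEdgeConnOn F) :
    ∃ d, G.IsOrientation d ∧ ∀ u v, ReflTransGen (G.arc d F) u v := by
  obtain ⟨d₀, hd₀⟩ := exists_isOrientation (G := G)
  cases isEmpty_or_nonempty G.V with
  | inl hV => exact ⟨d₀, hd₀, fun u => isEmptyElim u⟩
  | inr hV =>
    obtain ⟨v₀⟩ := hV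
    obtain ⟨W, ⟨hne, d, O, hW⟩, hmax⟩ := (Set.toFinite
        {W : Set G.V | W.Nonempty ∧ ∃ d O, G.IsStrongPartialOrientation F d O W}).exists_maximal
        ⟨{v₀}, Set.singleton_nonempty v₀, d₀, ∅,
          ⟨⟨hd₀, Set.empty_subset F, fun _ h => h.elim⟩, by rintro p rfl q rfl; rfl⟩⟩
    by_cases huniv : W = Set.univ
    · subst huniv
      exact ⟨d, hW.isOrientation, fun u v =>
        ReflTransGen.mono (arc_mono hW.subset) _ _ (hW.reach u trivial v trivial)⟩
    · obtain ⟨d', O', W', hW', hWW'⟩ := hW.exists_ssuperset hF hne huniv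
      exact absurd (hmax ⟨hne.mono hWW'.subset, d', O', hW'⟩ hWW'.subset) hWW'.not_subset

variable (G) in
lemma sum_outDegOn_sub_inDegOn {R : Type*} [CommRing R] (F : Set G.E) (d : G.E → G.V × G.V) :
    ∑ v, ((G.outDegOn F d v : R) - G.inDegOn F d v) = 0 := by
  simp only [Finset.sum_sub_distrib, ← Nat.cast_sum, outDegOn, inDegOn, Set.sum_ncard_fiber,
    sub_self]

lemma outDeg_ite (F : Set G.E) (d d' : G.E → G.V × G.V) (v : G.V) :
    G.outDeg (fun e => if e ∈ F then d e else d' e) v =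
      G.outDegOn F d v + G.outDegOn Fᶜ d' v := by
  simpa only [outDeg, outDegOn, apply_ite Prod.fst] using
    Set.ncard_fiber_ite F (fun e => (d e).1) (fun e => (d' e).1) v

lemma inDeg_ite (F : Set G.E) (d d' : G.E → G.V × G.V) (v : G.V) :
    G.inDeg (fun e => if e ∈ F then d e else d' e) v =
      G.inDegOn F d v + G.inDegOn Fᶜ d' v := by
  simpa only [inDeg, inDegOn, apply_ite Prod.snd] using
    Set.ncard_fiber_ite F (fun e => (d e).2) (fun e => (d' e).2) v

end Multigraph

/-- If `G` can be edge-partitioned into two spanning subgraphs `G1`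
(Z3-connected) and `G2` (2-edge-connected), then `G ∈ S3`. -/
theorem stmt_14 (G : Multigraph) (F1 F2 : Set G.E)
    (hdisj : Disjoint F1 F2) (hunion : F1 ∪ F2 = Set.univ)
    (h1 : G.SubZ3Connected Set.univ F1) (h2 : G.TwoEdgeConnOn F2) :
    G.InS3 := by
  obtain rfl : F1 = F2ᶜ := (IsCompl.of_eq hdisj.eq_bot hunion).eq_compl
  intro β hβ
  obtain ⟨d₂, hd₂, hstrong⟩ := h2.exists_stronglyConnected_orientation
  obtain ⟨d₁, hd₁, hdeg⟩ :=
    h1 (fun v => β v - (G.outDegOn F2 d₂ v - G.inDegOn F2 d₂ v))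
      (fun v hv => (hv trivial).elim)
      (by rw [Finset.sum_sub_distrib, hβ, G.sum_outDegOn_sub_inDegOn, sub_self])
  refine ⟨fun e => if e ∈ F2 then d₂ e else d₁ e, fun e => ?_, fun u v => ?_, fun v => ?_⟩
  · dsimp only
    split_ifs
    exacts [hd₂ e, hd₁ e]
  · refine Relation.ReflTransGen.mono (fun x y ⟨f, hf, hfxy⟩ => ⟨f, ?_⟩) _ _ (hstrong u v)
    simp [hf, hfxy]
  · have hv : (G.outDegOn F2ᶜ d₁ v : ZMod 3) - G.inDegOn F2ᶜ d₁ v =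
      β v - (G.outDegOn F2 d₂ v - G.inDegOn F2 d₂ v) := hdeg v trivial
    rw [Multigraph.outDeg_ite, Multigraph.inDeg_ite]
    push_cast
    linear_combination hv
end

section
/- Let T be a triangle-tree on n ≥ 4 vertices with exactly t leaves. Then T contains a removable set of size at least n − t − 1, i.e., an edge set X ⊆ E(T) with |X| ≥ n − t − 1 such that T − X is 2-edge-connected. -/
open scoped Classical

/-! Induct along the construction of the triangle-tree, keeping a removable set `X` with
`n ≤ |X| + t + 1`. When a new vertex `v` is joined to the ends of an edge `ab`, put `ab` into
`X` as well: what remains is the old 2-edge-connected graph with `ab` subdivided by `v` (or with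
the ear `a v b` added, if `ab` was already removed), which is again 2-edge-connected. The number
of leaves goes up by one unless `a` or `b` was a leaf; a leaf keeps both of its edges in a
2-edge-connected spanning subgraph, so in that case `ab` was still present and `X` grows by one.
Finally, `a` and `b` can both be leaves only in the initial triangle, all of whose vertices are
leaves. -/

namespace Multigraph

open Relation

def AdjIn (G : Multigraph) (F : Set G.E) (x y : G.V) : Prop :=
  ∃ e ∈ F, G.ends e = s(x, y)

def LinkedOn (G : Multigraph) (S : Set G.V) (F : Set G.E) : Prop :=
  ∀ u ∈ S, ∀ w ∈ S, ReflTransGen (G.AdjIn F) u w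

def TwoEdgeLinkedOn (G : Multigraph) (S : Set G.V) (F : Set G.E) : Prop :=
  G.LinkedOn S F ∧ ∀ f ∈ F, G.LinkedOn S (F \ {f})

def leaves (G : Multigraph) (S : Set G.V) (F : Set G.E) : Set G.V :=
  {w ∈ S | G.degIn F w = 2}

variable {G : Multigraph} {S : Set G.V} {C D F : Set G.E} {r u v w x y z a b : G.V}
  {e f g e1 e2 e3 : G.E}

theorem ne_of_ends_eq (h : G.ends e = s(a, b)) : a ≠ b := by
  rintro rfl
  exact G.loopless e (h ▸ Sym2.mk_isDiag_iff.mpr rfl)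

theorem ne_of_ends_eq_of_ne (h1 : G.ends e1 = s(v, a)) (h2 : G.ends e2 = s(v, b)) (hab : a ≠ b) :
    e1 ≠ e2 :=
  fun h => hab (Sym2.congr_right.mp (h1.symm.trans (h ▸ h2)))

theorem triangle_edges_ne (hxy : G.ends e1 = s(x, y)) (hyz : G.ends e2 = s(y, z))
    (hxz : G.ends e3 = s(x, z)) : e1 ≠ e2 ∧ e1 ≠ e3 ∧ e2 ≠ e3 :=
  ⟨ne_of_ends_eq_of_ne (hxy.trans Sym2.eq_swap) hyz (ne_of_ends_eq hxz),
    ne_of_ends_eq_of_ne hxy hxz (ne_of_ends_eq hyz),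
    ne_of_ends_eq_of_ne (hyz.trans Sym2.eq_swap) (hxz.trans Sym2.eq_swap) (ne_of_ends_eq hxy).symm⟩

theorem AdjIn.mono (hCD : C ⊆ D) : G.AdjIn C x y → G.AdjIn D x y :=
  fun ⟨e, he, hxy⟩ => ⟨e, hCD he, hxy⟩

instance : Std.Symm (G.AdjIn F) :=
  ⟨fun _ _ ⟨e, he, hxy⟩ => ⟨e, he, hxy.trans Sym2.eq_swap⟩⟩

theorem exists_mem_ends_of_reflTransGen (h : ReflTransGen (G.AdjIn F) x y) (hxy : x ≠ y) :
    ∃ f ∈ F, x ∈ G.ends f := by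
  obtain rfl | ⟨_, ⟨f, hf, hends⟩, -⟩ := h.cases_head
  · exact absurd rfl hxy
  · exact ⟨f, hf, hends ▸ Sym2.mem_mk_left _ _⟩

theorem linkedOn_of_reflTransGen (hr : ∀ u ∈ S, ReflTransGen (G.AdjIn D) r u) :
    G.LinkedOn S D :=
  fun u hu w hw => (Std.Symm.symm _ _ (hr u hu)).trans (hr w hw)

theorem LinkedOn.of_adjIn (hC : G.LinkedOn S C)
    (hCD : ∀ x y, G.AdjIn C x y → ReflTransGen (G.AdjIn D) x y) : G.LinkedOn S D :=
  fun u hu w hw => reflTransGen_closed hCD u w (hC u hu w hw)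

theorem LinkedOn.mono (hC : G.LinkedOn S C) (hCD : C ⊆ D) : G.LinkedOn S D :=
  hC.of_adjIn fun _ _ h => .single (h.mono hCD)

theorem LinkedOn.insert (hS : G.LinkedOn S D) (ha : a ∈ S) (hva : G.AdjIn D v a) :
    G.LinkedOn (insert v S) D :=
  linkedOn_of_reflTransGen (r := a) fun u hu => by
    rcases hu with rfl | hu
    · exact .single (Std.Symm.symm _ _ hva)
    · exact hS a ha u hu

theorem LinkedOn.connOn (h : G.LinkedOn Set.univ F) : G.ConnOn F :=
  fun u w => h u trivial w trivial

theorem TwoEdgeLinkedOn.twoEdgeConnOn (h : G.TwoEdgeLinkedOn Set.univ F) : G.TwoEdgeConnOn F :=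
  ⟨h.1.connOn, fun f hf => (h.2 f hf).connOn⟩

theorem TwoEdgeLinkedOn.linkedOn_sdiff_singleton (hC : G.TwoEdgeLinkedOn S C) (f : G.E) :
    G.LinkedOn S (C \ {f}) := by
  by_cases hf : f ∈ C
  · exact hC.2 f hf
  · rw [Set.sdiff_singleton_eq_self hf]
    exact hC.1

theorem TwoEdgeLinkedOn.mono (hC : G.TwoEdgeLinkedOn S C) (hCD : C ⊆ D) :
    G.TwoEdgeLinkedOn S D :=
  ⟨hC.1.mono hCD, fun f _ => (hC.linkedOn_sdiff_singleton f).mono (Set.sdiff_subset_sdiff_left hCD)⟩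

theorem reflTransGen_of_adjIn_subdivide (hab : G.ends e = s(a, b)) (h1 : G.ends e1 = s(v, a))
    (h2 : G.ends e2 = s(v, b)) (hCD : C \ {e} ⊆ D) (he1 : e1 ∈ D) (he2 : e2 ∈ D)
    (hxy : G.AdjIn C x y) : ReflTransGen (G.AdjIn D) x y := by
  obtain ⟨g, hg, hends⟩ := hxy
  by_cases hge : g = e
  · subst hge
    have hav : G.AdjIn D a v := ⟨e1, he1, h1.trans Sym2.eq_swap⟩
    have hbv : G.AdjIn D b v := ⟨e2, he2, h2.trans Sym2.eq_swap⟩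
    rcases Sym2.eq_iff.mp (hends.symm.trans hab) with ⟨rfl, rfl⟩ | ⟨rfl, rfl⟩
    · exact .head hav (.single (Std.Symm.symm _ _ hbv))
    · exact .head hbv (.single (Std.Symm.symm _ _ hav))
  · exact .single ⟨g, hCD ⟨hg, hge⟩, hends⟩

/-- Subdividing `e = ab` by a new vertex `v` preserves 2-edge-connectivity; when `e ∉ C`
this adds the ear `a v b` instead. -/
theorem TwoEdgeLinkedOn.subdivide (hC : G.TwoEdgeLinkedOn S C) (ha : a ∈ S) (hb : b ∈ S)
    (hab : G.ends e = s(a, b)) (h1 : G.ends e1 = s(v, a)) (h2 : G.ends e2 = s(v, b))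
    (h12 : e1 ≠ e2) (he1 : e1 ∉ C) (he2 : e2 ∉ C) :
    G.TwoEdgeLinkedOn (insert v S) (insert e1 (insert e2 (C \ {e}))) := by
  refine ⟨?_, fun f _ => ?_⟩
  · exact (hC.1.of_adjIn fun _ _ => reflTransGen_of_adjIn_subdivide hab h1 h2
      (fun g hg => .inr (.inr hg)) (.inl rfl) (.inr (.inl rfl))).insert ha ⟨e1, .inl rfl, h1⟩
  set C' := insert e1 (insert e2 (C \ {e}))
  by_cases hf1 : f = e1
  · subst hf1
    have hsub : C \ {e} ⊆ C' \ {f} := fun g hg => ⟨.inr (.inr hg), fun hgf => he1 (hgf ▸ hg.1)⟩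
    exact ((hC.linkedOn_sdiff_singleton e).mono hsub).insert hb ⟨e2, ⟨.inr (.inl rfl), h12.symm⟩, h2⟩
  by_cases hf2 : f = e2
  · subst hf2
    have hsub : C \ {e} ⊆ C' \ {f} := fun g hg => ⟨.inr (.inr hg), fun hgf => he2 (hgf ▸ hg.1)⟩
    exact ((hC.linkedOn_sdiff_singleton e).mono hsub).insert ha ⟨e1, ⟨.inl rfl, h12⟩, h1⟩
  have hsub : (C \ {f}) \ {e} ⊆ C' \ {f} :=
    fun g ⟨⟨hgC, hgf⟩, hge⟩ => ⟨.inr (.inr ⟨hgC, hge⟩), hgf⟩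
  have he1' : e1 ∈ C' \ {f} := ⟨.inl rfl, Ne.symm hf1⟩
  exact ((hC.linkedOn_sdiff_singleton f).of_adjIn fun _ _ =>
    reflTransGen_of_adjIn_subdivide hab h1 h2 hsub he1' ⟨.inr (.inl rfl), Ne.symm hf2⟩).insert ha
      ⟨e1, he1', h1⟩

theorem twoEdgeLinkedOn_triangle (hxy : G.ends e1 = s(x, y)) (hyz : G.ends e2 = s(y, z))
    (hxz : G.ends e3 = s(x, z)) : G.TwoEdgeLinkedOn {x, y, z} {e1, e2, e3} := by
  obtain ⟨h12, h13, h23⟩ := triangle_edges_ne hxy hyz hxz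
  have key : ∀ f ∈ ({e1, e2, e3} : Set G.E), G.LinkedOn {x, y, z} ({e1, e2, e3} \ {f}) := by
    rintro f (rfl | rfl | rfl)
    · refine linkedOn_of_reflTransGen (r := z) ?_
      rintro u (rfl | rfl | rfl)
      · exact .single ⟨e3, by simp [h13.symm], hxz.trans Sym2.eq_swap⟩
      · exact .single ⟨e2, by simp [h12.symm], hyz.trans Sym2.eq_swap⟩
      · exact .refl
    · refine linkedOn_of_reflTransGen (r := x) ?_
      rintro u (rfl | rfl | rfl)
      · exact .refl
      · exact .single ⟨e1, by simp [h12], hxy⟩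
      · exact .single ⟨e3, by simp [h23.symm], hxz⟩
    · refine linkedOn_of_reflTransGen (r := y) ?_
      rintro u (rfl | rfl | rfl)
      · exact .single ⟨e1, by simp [h13], hxy.trans Sym2.eq_swap⟩
      · exact .refl
      · exact .single ⟨e2, by simp [h23], hyz⟩
  exact ⟨(key e1 (.inl rfl)).mono Set.sdiff_subset, key⟩

theorem degIn_eq_ncard_inter : G.degIn F w = (F ∩ {e | w ∈ G.ends e}).ncard := rfl

theorem degIn_mono (hCD : C ⊆ D) : G.degIn C w ≤ G.degIn D w :=
  Set.ncard_le_ncard (Set.inter_subset_inter_left _ hCD)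

theorem degIn_insert (hf : f ∉ F) :
    G.degIn (insert f F) w = G.degIn F w + if w ∈ G.ends f then 1 else 0 := by
  simp only [degIn_eq_ncard_inter]
  split_ifs with hw
  · rw [Set.insert_inter_of_mem (t := {e | w ∈ G.ends e}) hw,
      Set.ncard_insert_of_notMem fun h => hf h.1]
  · rw [Set.insert_inter_of_notMem (t := {e | w ∈ G.ends e}) hw, add_zero]

theorem two_le_degIn (hfg : f ≠ g) (hf : f ∈ F) (hg : g ∈ F) (hwf : w ∈ G.ends f)
    (hwg : w ∈ G.ends g) : 2 ≤ G.degIn F w := by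
  rw [degIn_eq_ncard_inter, ← Set.ncard_pair hfg]
  exact Set.ncard_le_ncard (Set.pair_subset ⟨hf, hwf⟩ ⟨hg, hwg⟩)

theorem degIn_eq_two (hfg : f ≠ g) (hf : f ∈ F) (hg : g ∈ F) (hwf : w ∈ G.ends f)
    (hwg : w ∈ G.ends g) (hF : ∀ h ∈ F, w ∈ G.ends h → h = f ∨ h = g) : G.degIn F w = 2 := by
  rw [degIn_eq_ncard_inter, ← Set.ncard_pair hfg]
  congr 1
  ext h
  exact ⟨fun ⟨hh, hwh⟩ => hF h hh hwh, by rintro (rfl | rfl) <;> simp_all⟩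

theorem mem_of_degIn_le (hCF : C ⊆ F) (hdeg : G.degIn F w ≤ G.degIn C w) (he : e ∈ F)
    (hw : w ∈ G.ends e) : e ∈ C := by
  rw [degIn_eq_ncard_inter, degIn_eq_ncard_inter] at hdeg
  have hinc := Set.eq_of_subset_of_ncard_le (Set.inter_subset_inter_left _ hCF) hdeg
  have heF : e ∈ F ∩ {e | w ∈ G.ends e} := ⟨he, hw⟩
  exact (hinc ▸ heF).1

theorem TwoEdgeLinkedOn.two_le_degIn (hC : G.TwoEdgeLinkedOn S C) (hw : w ∈ S) (hu : u ∈ S)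
    (hwu : w ≠ u) : 2 ≤ G.degIn C w := by
  obtain ⟨f, hf, hwf⟩ := exists_mem_ends_of_reflTransGen (hC.1 w hw u hu) hwu
  obtain ⟨g, ⟨hg, hgf⟩, hwg⟩ := exists_mem_ends_of_reflTransGen (hC.2 f hf w hw u hu) hwu
  exact Multigraph.two_le_degIn (Ne.symm hgf) hf hg hwf hwg

theorem TwoEdgeLinkedOn.mem_of_degIn_eq_two (hC : G.TwoEdgeLinkedOn S C) (hCF : C ⊆ F)
    (ha : a ∈ S) (hb : b ∈ S) (hab : G.ends e = s(a, b)) (he : e ∈ F) (hdeg : G.degIn F a = 2) :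
    e ∈ C :=
  mem_of_degIn_le hCF (hdeg ▸ hC.two_le_degIn ha hb (ne_of_ends_eq hab)) he
    (hab ▸ Sym2.mem_mk_left _ _)

theorem leaves_triangle (hxy : G.ends e1 = s(x, y)) (hyz : G.ends e2 = s(y, z))
    (hxz : G.ends e3 = s(x, z)) :
    G.leaves {x, y, z} {e1, e2, e3} = {x, y, z} := by
  have hxy' := ne_of_ends_eq hxy
  have hyz' := ne_of_ends_eq hyz
  have hxz' := ne_of_ends_eq hxz
  obtain ⟨h12, h13, h23⟩ := triangle_edges_ne hxy hyz hxz
  refine Set.sep_eq_self_iff_mem_true.mpr ?_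
  rintro w (rfl | rfl | rfl)
  · refine degIn_eq_two h13 (by simp) (by simp) (by simp [hxy]) (by simp [hxz]) ?_
    rintro h (rfl | rfl | rfl) hw <;> grind
  · refine degIn_eq_two h12 (by simp) (by simp) (by simp [hxy]) (by simp [hyz]) ?_
    rintro h (rfl | rfl | rfl) hw <;> grind
  · refine degIn_eq_two h23 (by simp) (by simp) (by simp [hyz]) (by simp [hxz]) ?_
    rintro h (rfl | rfl | rfl) hw <;> grind

theorem IsTriangleTree.mem_of_mem_ends (h : G.IsTriangleTree S F) (he : e ∈ F)
    (hw : w ∈ G.ends e) : w ∈ S := by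
  induction h generalizing e w with
  | base x y z e1 e2 e3 _ _ _ h1 h2 h3 =>
    rcases he with rfl | rfl | rfl <;> simp only [h1, h2, h3, Sym2.mem_iff] at hw <;>
      rcases hw with rfl | rfl <;> simp
  | grow S F hT v a b hv e0 he0 hab e1 e2 h1 h2 ih =>
    rcases he with rfl | rfl | he
    · rw [h1, Sym2.mem_iff] at hw
      rcases hw with rfl | rfl
      · exact .inl rfl
      · exact .inr (ih he0 (hab ▸ Sym2.mem_mk_left _ _))
    · rw [h2, Sym2.mem_iff] at hw
      rcases hw with rfl | rfl
      · exact .inl rfl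
      · exact .inr (ih he0 (hab ▸ Sym2.mem_mk_right _ _))
    · exact .inr (ih he hw)

theorem IsTriangleTree.notMem_of_ends_eq (h : G.IsTriangleTree S F) (hv : v ∉ S)
    (he : G.ends e = s(v, a)) : e ∉ F :=
  fun heF => hv (h.mem_of_mem_ends heF (he ▸ Sym2.mem_mk_left _ _))

theorem IsTriangleTree.two_le_degIn (h : G.IsTriangleTree S F) (hw : w ∈ S) :
    2 ≤ G.degIn F w := by
  induction h generalizing w with
  | base x y z e1 e2 e3 _ _ _ h1 h2 h3 =>
    rw [← leaves_triangle h1 h2 h3] at hw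
    exact hw.2.ge
  | grow S F hT v a b hv e he hab e1 e2 h1 h2 ih =>
    rcases hw with rfl | hw
    · exact Multigraph.two_le_degIn (ne_of_ends_eq_of_ne h1 h2 (ne_of_ends_eq hab)) (.inl rfl)
        (.inr (.inl rfl)) (h1 ▸ Sym2.mem_mk_left _ _) (h2 ▸ Sym2.mem_mk_left _ _)
    · exact (ih hw).trans (degIn_mono fun _ hg => .inr (.inr hg))

theorem IsTriangleTree.leaves_grow (h : G.IsTriangleTree S F) (hv : v ∉ S) (he : e ∈ F)
    (hab : G.ends e = s(a, b)) (h1 : G.ends e1 = s(v, a)) (h2 : G.ends e2 = s(v, b)) :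
    G.leaves (insert v S) (insert e1 (insert e2 F)) = insert v (G.leaves S F \ {a, b}) := by
  have ha : a ∈ S := h.mem_of_mem_ends he (hab ▸ Sym2.mem_mk_left _ _)
  have hb : b ∈ S := h.mem_of_mem_ends he (hab ▸ Sym2.mem_mk_right _ _)
  have he1 : e1 ∉ insert e2 F := by
    rintro (h12 | h1F)
    · exact ne_of_ends_eq_of_ne h1 h2 (ne_of_ends_eq hab) h12
    · exact h.notMem_of_ends_eq hv h1 h1F
  have hdeg : ∀ w, G.degIn (insert e1 (insert e2 F)) w =
      G.degIn F w + (if w = v ∨ w = b then 1 else 0) + (if w = v ∨ w = a then 1 else 0) := by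
    intro w
    rw [degIn_insert he1, degIn_insert (h.notMem_of_ends_eq hv h2), h1, h2]
    simp only [Sym2.mem_iff]
  have hv0 : G.degIn F v = 0 := by
    rw [degIn_eq_ncard_inter, Set.ncard_eq_zero]
    exact Set.eq_empty_of_forall_notMem fun f hf => hv (h.mem_of_mem_ends hf.1 hf.2)
  have ha2 := h.two_le_degIn ha
  have hb2 := h.two_le_degIn hb
  ext w
  simp only [leaves, Set.mem_sep_iff, Set.mem_insert_iff, Set.mem_sdiff, Set.mem_singleton_iff, hdeg]
  by_cases hwv : w = v
  · subst hwv
    simp [hv0]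
  · grind

/-- Each growth step raises both ends of its base edge to degree at least three. -/
theorem IsTriangleTree.ncard_eq_three_and_leaves_eq_of_adj (h : G.IsTriangleTree S F)
    (hf : f ∈ F) (hxy : G.ends f = s(x, y)) (hx : x ∈ G.leaves S F) (hy : y ∈ G.leaves S F) :
    S.ncard = 3 ∧ G.leaves S F = S := by
  induction h generalizing f x y with
  | base p q r e1 e2 e3 hpq hpr hqr h1 h2 h3 =>
    exact ⟨Set.ncard_eq_three.mpr ⟨p, q, r, hpq, hpr, hqr, rfl⟩, leaves_triangle h1 h2 h3⟩
  | grow S F hT v a b hv e he hab e1 e2 h1 h2 ih =>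
    exfalso
    rw [hT.leaves_grow hv he hab h1 h2] at hx hy
    have ha : a ∈ S := hT.mem_of_mem_ends he (hab ▸ Sym2.mem_mk_left _ _)
    have hb : b ∈ S := hT.mem_of_mem_ends he (hab ▸ Sym2.mem_mk_right _ _)
    have hab' := ne_of_ends_eq hab
    rcases hf with rfl | rfl | hf
    · rw [h1] at hxy
      rcases Sym2.eq_iff.mp hxy with ⟨rfl, rfl⟩ | ⟨rfl, rfl⟩
      · exact hy.elim (fun h => hv (h ▸ ha)) fun h => h.2 (.inl rfl)
      · exact hx.elim (fun h => hv (h ▸ ha)) fun h => h.2 (.inl rfl)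
    · rw [h2] at hxy
      rcases Sym2.eq_iff.mp hxy with ⟨rfl, rfl⟩ | ⟨rfl, rfl⟩
      · exact hy.elim (fun h => hv (h ▸ hb)) fun h => h.2 (.inr rfl)
      · exact hx.elim (fun h => hv (h ▸ hb)) fun h => h.2 (.inr rfl)
    have hxS : x ∈ S := hT.mem_of_mem_ends hf (hxy ▸ Sym2.mem_mk_left _ _)
    have hyS : y ∈ S := hT.mem_of_mem_ends hf (hxy ▸ Sym2.mem_mk_right _ _)
    obtain ⟨hxL, hxab⟩ := hx.resolve_left fun h => hv (h ▸ hxS)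
    obtain ⟨hyL, hyab⟩ := hy.resolve_left fun h => hv (h ▸ hyS)
    have hS3 := (ih hf hxy hxL hyL).1
    have hpair : ({x, y} : Set G.V).ncard ≤ (S \ {a, b}).ncard :=
      Set.ncard_le_ncard (Set.pair_subset ⟨hxS, hxab⟩ ⟨hyS, hyab⟩)
    rw [Set.ncard_pair (ne_of_ends_eq hxy), Set.ncard_sdiff (Set.pair_subset ha hb),
      Set.ncard_pair hab', hS3] at hpair
    omega

theorem IsTriangleTree.ncard_le_insert_add_leaves_sdiff {X : Set G.E} (h : G.IsTriangleTree S F)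
    (he : e ∈ F) (hab : G.ends e = s(a, b))
    (hcount : S.ncard ≤ X.ncard + (G.leaves S F).ncard + 1)
    (hleaf : a ∈ G.leaves S F ∨ b ∈ G.leaves S F → e ∉ X) :
    S.ncard ≤ (insert e X).ncard + (G.leaves S F \ {a, b}).ncard + 1 := by
  set L := G.leaves S F
  have hX : X.ncard ≤ (insert e X).ncard := Set.ncard_le_ncard (Set.subset_insert e X)
  have hXe : a ∈ L ∨ b ∈ L → (insert e X).ncard = X.ncard + 1 :=
    fun hL => Set.ncard_insert_of_notMem (hleaf hL)
  by_cases haL : a ∈ L <;> by_cases hbL : b ∈ L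
  · have hLS : L.ncard = S.ncard :=
      congrArg Set.ncard (h.ncard_eq_three_and_leaves_eq_of_adj he hab haL hbL).2
    have hsplit := Set.ncard_le_ncard_sdiff_add_ncard L {a, b}
    rw [Set.ncard_pair (ne_of_ends_eq hab)] at hsplit
    have := hXe (.inl haL)
    omega
  · rw [Set.pair_comm, Set.sdiff_insert_of_notMem hbL]
    have := Set.ncard_sdiff_singleton_add_one haL
    have := hXe (.inl haL)
    omega
  · rw [Set.sdiff_insert_of_notMem haL]
    have := Set.ncard_sdiff_singleton_add_one hbL
    have := hXe (.inr hbL)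
    omega
  · rw [Set.sdiff_insert_of_notMem haL, Set.sdiff_singleton_eq_self hbL]
    omega

theorem IsTriangleTree.exists_removable (h : G.IsTriangleTree S F) :
    ∃ X ⊆ F, S.ncard ≤ X.ncard + (G.leaves S F).ncard + 1 ∧ G.TwoEdgeLinkedOn S (F \ X) := by
  induction h with
  | base x y z e1 e2 e3 _ _ _ h1 h2 h3 =>
    refine ⟨∅, Set.empty_subset _, by rw [leaves_triangle h1 h2 h3]; omega, ?_⟩
    rw [Set.sdiff_empty]
    exact twoEdgeLinkedOn_triangle h1 h2 h3
  | grow S F hT v a b hv e he hab e1 e2 h1 h2 ih =>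
    obtain ⟨X, hXF, hcount, hC⟩ := ih
    have ha : a ∈ S := hT.mem_of_mem_ends he (hab ▸ Sym2.mem_mk_left _ _)
    have hb : b ∈ S := hT.mem_of_mem_ends he (hab ▸ Sym2.mem_mk_right _ _)
    have hab' := ne_of_ends_eq hab
    have he1 := hT.notMem_of_ends_eq hv h1
    have he2 := hT.notMem_of_ends_eq hv h2
    have hXF' : insert e X ⊆ F := Set.insert_subset he hXF
    refine ⟨insert e X, hXF'.trans ((Set.subset_insert _ _).trans (Set.subset_insert _ _)), ?_,
      (hC.subdivide ha hb hab h1 h2 (ne_of_ends_eq_of_ne h1 h2 hab') (fun h => he1 h.1)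
        fun h => he2 h.1).mono ?_⟩
    · have hvL : v ∉ G.leaves S F \ {a, b} := fun h => hv h.1.1
      rw [hT.leaves_grow hv he hab h1 h2, Set.ncard_insert_of_notMem hv,
        Set.ncard_insert_of_notMem hvL]
      have := hT.ncard_le_insert_add_leaves_sdiff he hab hcount fun hL => by
        rcases hL with ⟨-, hdeg⟩ | ⟨-, hdeg⟩
        · exact (hC.mem_of_degIn_eq_two Set.sdiff_subset ha hb hab he hdeg).2
        · exact (hC.mem_of_degIn_eq_two Set.sdiff_subset hb ha (hab.trans Sym2.eq_swap) he hdeg).2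
      omega
    · have hnew : ∀ g ∉ F, g ∉ insert e X := fun g hg h => hg (hXF' h)
      rintro g (rfl | rfl | ⟨⟨hgF, hgX⟩, hge⟩)
      · exact ⟨.inl rfl, hnew _ he1⟩
      · exact ⟨.inr (.inl rfl), hnew _ he2⟩
      · exact ⟨.inr (.inr hgF), by rintro (rfl | h); exacts [hge rfl, hgX h]⟩

end Multigraph

theorem stmt_15_general (T : Multigraph) (hT : T.IsTriangleTree Set.univ Set.univ) :
    ∃ X : Set T.E,
      Fintype.card T.V - {v : T.V | T.degree v = 2}.ncard - 1 ≤ X.ncard ∧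
      T.TwoEdgeConnOn {e : T.E | e ∉ X} := by
  obtain ⟨X, -, hcount, hX⟩ := hT.exists_removable
  have hleaves : T.leaves Set.univ Set.univ = {v | T.degree v = 2} := by
    ext v
    simp [Multigraph.leaves, Multigraph.degIn, Multigraph.degree]
  rw [Set.ncard_univ, Nat.card_eq_fintype_card, hleaves] at hcount
  rw [← Set.compl_eq_univ_sdiff] at hX
  exact ⟨X, by omega, hX.twoEdgeConnOn⟩

/-- Let `T` be a triangle-tree on `n ≥ 4` vertices with `t` leaves.
Then `T` contains a removable edge set of size at least `n − t − 1`, i.e. a set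
`X ⊆ E(T)` with `T − X` 2-edge-connected. -/
theorem stmt_15 (T : Multigraph) (hT : T.IsTriangleTree Set.univ Set.univ)
    (hn : 4 ≤ Fintype.card T.V) :
    ∃ X : Set T.E,
      Fintype.card T.V - {v : T.V | T.degree v = 2}.ncard - 1 ≤ X.ncard ∧
      T.TwoEdgeConnOn {e : T.E | e ∉ X} :=
  stmt_15_general T hT
end
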